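/- arXiv:1808.04067 — 7 statements merged into one kernel-verified Lean document; each statement's English description precedes it below -/
import Mathlib

section
/- Let 0 < α < 1, 0 < β < 1, τ > 0, σ_e > 0, t > 0, p > 0, and c be real. Suppose x₁, x₂ ∈ (0,1) and θ₁ < θ₂ satisfy the first-order conditions x_i^{−α} − (t^{1−β}/(1−β))·(1−x_i)^{−α} = [(1−θ_i)p − c]/(τσ_e) for i = 1,2. Then x₁ < x₂; i.e., the mobile user's optimal sponsored content demand is strictly increasing in the sponsorship factor θ. -/
/-- The mobile user's optimal sponsored content demand is strictly increasing in
the sponsorship factor `θ`. -/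
theorem demand_strictMono_in_theta (α β τ σe t c p θ₁ θ₂ x₁ x₂ : ℝ)
    (hα0 : 0 < α) (hα1 : α < 1) (hβ0 : 0 < β) (hβ1 : β < 1)
    (hτ : 0 < τ) (hσe : 0 < σe) (ht : 0 < t) (hp : 0 < p)
    (hθ : θ₁ < θ₂)
    (hx₁ : x₁ ∈ Set.Ioo (0 : ℝ) 1) (hx₂ : x₂ ∈ Set.Ioo (0 : ℝ) 1)
    (hFOC₁ : x₁ ^ (-α) - t ^ (1 - β) / (1 - β) * (1 - x₁) ^ (-α)
      = ((1 - θ₁) * p - c) / (τ * σe))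
    (hFOC₂ : x₂ ^ (-α) - t ^ (1 - β) / (1 - β) * (1 - x₂) ^ (-α)
      = ((1 - θ₂) * p - c) / (τ * σe)) :
    x₁ < x₂ := by
  obtain ⟨hx₁0, hx₁1⟩ := hx₁
  obtain ⟨hx₂0, hx₂1⟩ := hx₂
  have hK : 0 < t ^ (1 - β) / (1 - β) :=
    div_pos (Real.rpow_pos_of_pos ht _) (by linarith)
  have hτσ : 0 < τ * σe := mul_pos hτ hσe
  have hRHS : ((1 - θ₂) * p - c) / (τ * σe) < ((1 - θ₁) * p - c) / (τ * σe) := by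
    apply div_lt_div_of_pos_right _ hτσ
    nlinarith
  by_contra h
  push_neg at h   -- x₂ ≤ x₁
  have h1 : x₁ ^ (-α) ≤ x₂ ^ (-α) :=
    Real.rpow_le_rpow_of_nonpos hx₂0 h (by linarith)
  have h2 : (1 - x₂) ^ (-α) ≤ (1 - x₁) ^ (-α) :=
    Real.rpow_le_rpow_of_nonpos (by linarith) (by linarith) (by linarith)
  have := hFOC₁ ▸ hFOC₂ ▸ hRHS
  nlinarith
end

section
/- Let 0 < α < 1, 0 < β < 1, τ > 0, σ_e > 0, p > 0, and c, θ be real. Suppose x₁, x₂ ∈ (0,1) and 0 < t₁ < t₂ satisfy the first-order conditions x_i^{−α} − (t_i^{1−β}/(1−β))·(1−x_i)^{−α} = [(1−θ)p − c]/(τσ_e) for i = 1,2. Then x₁ > x₂; i.e., the mobile user's optimal sponsored content demand is strictly decreasing in the caching effort t. -/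
/-- The mobile user's optimal sponsored content demand is strictly decreasing in
the caching effort `t`. -/
theorem demand_strictAnti_in_t (α β τ σe c p θ t₁ t₂ x₁ x₂ : ℝ)
    (hα0 : 0 < α) (hα1 : α < 1) (hβ0 : 0 < β) (hβ1 : β < 1)
    (hτ : 0 < τ) (hσe : 0 < σe) (hp : 0 < p)
    (ht₁ : 0 < t₁) (ht : t₁ < t₂)
    (hx₁ : x₁ ∈ Set.Ioo (0 : ℝ) 1) (hx₂ : x₂ ∈ Set.Ioo (0 : ℝ) 1)
    (hFOC₁ : x₁ ^ (-α) - t₁ ^ (1 - β) / (1 - β) * (1 - x₁) ^ (-α)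
      = ((1 - θ) * p - c) / (τ * σe))
    (hFOC₂ : x₂ ^ (-α) - t₂ ^ (1 - β) / (1 - β) * (1 - x₂) ^ (-α)
      = ((1 - θ) * p - c) / (τ * σe)) :
    x₂ < x₁ := by
  obtain ⟨hx₁0, hx₁1⟩ := hx₁
  obtain ⟨hx₂0, hx₂1⟩ := hx₂
  by_contra h
  push_neg at h
  -- h : x₁ ≤ x₂
  have hβ' : (0:ℝ) < 1 - β := by linarith
  have h1 : x₂ ^ (-α) ≤ x₁ ^ (-α) := by
    rw [Real.rpow_neg hx₁0.le, Real.rpow_neg hx₂0.le]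
    exact inv_anti₀ (Real.rpow_pos_of_pos hx₁0 α)
      (Real.rpow_le_rpow hx₁0.le h hα0.le)
  have h2 : (1 - x₁) ^ (-α) ≤ (1 - x₂) ^ (-α) := by
    rw [Real.rpow_neg (by linarith), Real.rpow_neg (by linarith)]
    exact inv_anti₀ (Real.rpow_pos_of_pos (by linarith) α)
      (Real.rpow_le_rpow (by linarith) (by linarith) hα0.le)
  have h3 : t₁ ^ (1 - β) < t₂ ^ (1 - β) :=
    Real.rpow_lt_rpow ht₁.le ht hβ'
  have hT₁ : 0 < t₁ ^ (1 - β) := Real.rpow_pos_of_pos ht₁ _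
  have hP₁ : 0 < (1 - x₁) ^ (-α) := Real.rpow_pos_of_pos (by linarith) _
  have key : t₁ ^ (1 - β) / (1 - β) * (1 - x₁) ^ (-α)
      < t₂ ^ (1 - β) / (1 - β) * (1 - x₂) ^ (-α) := by
    rw [div_mul_eq_mul_div, div_mul_eq_mul_div]
    apply div_lt_div_of_pos_right _ hβ'
    nlinarith
  linarith [hFOC₁, hFOC₂]
end

section
/- Let 0 < α < 1, 0 < β < 1, τ > 0, σ_e > 0, t > 0, p > 0, and c be real. Let I ⊆ ℝ be an open interval and x : I → (0,1) a twice differentiable function satisfying, for every θ ∈ I, the identity τσ_e·x(θ)^{−α} − (τσ_e·t^{1−β}/(1−β))·(1−x(θ))^{−α} + c − (1−θ)p = 0. If for every θ ∈ I the condition −x(θ)^{−α−2} + (t^{1−β}/(1−β))·(1−x(θ))^{−α−2} > 0 holds, then x''(θ) < 0 for every θ ∈ I. -/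
/-!
Write the first-order condition as `g (x θ) = (1 - θ) p - c` with
`g y = A y^(-α) - A k (1 - y)^(-α)`, `A = τ σ_e`, `k = t^(1-β)/(1-β)`. Differentiating twice
gives `g'(x) x' = -p` and `g''(x) x'^2 + g'(x) x'' = 0`. The positivity condition says exactly
that `g'' < 0` along `x` (and forces `k > 0`, hence `g' < 0` on `(0, 1)`), while `x' ≠ 0` by the
first identity; so `x'' = -g''(x) x'^2 / g'(x) < 0`.
-/

open Set Topology

noncomputable def rpowPair (A B r y : ℝ) : ℝ := A * y ^ r + B * (1 - y) ^ r

theorem hasDerivAt_rpowPair (A B r : ℝ) {y : ℝ} (hy : y ∈ Ioo (0 : ℝ) 1) :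
    HasDerivAt (rpowPair A B r) (rpowPair (r * A) (-(r * B)) (r - 1) y) y := by
  have hleft := Real.hasDerivAt_rpow_const (p := r) (Or.inl hy.1.ne')
  have hright := (Real.hasDerivAt_rpow_const (p := r) (Or.inl (sub_pos.2 hy.2).ne')).comp y
    ((hasDerivAt_id y).const_sub 1)
  unfold rpowPair
  refine ((hleft.const_mul A).add (hright.const_mul B)).congr_deriv ?_
  ring

theorem rpowPair_neg {A B r y : ℝ} (hA : A < 0) (hB : B < 0) (hy : y ∈ Ioo (0 : ℝ) 1) :
    rpowPair A B r y < 0 :=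
  add_neg (mul_neg_of_neg_of_pos hA (Real.rpow_pos_of_pos hy.1 r))
    (mul_neg_of_neg_of_pos hB (Real.rpow_pos_of_pos (sub_pos.2 hy.2) r))

theorem HasDerivAt.eq_of_eqOn_affine {f : ℝ → ℝ} {f' m q θ : ℝ} {s : Set ℝ}
    (hf : HasDerivAt f f' θ) (hs : s ∈ 𝓝 θ) (heq : EqOn f (fun u => m * u + q) s) : f' = m := by
  have haffine : HasDerivAt (fun u => m * u + q) m θ := by
    simpa using ((hasDerivAt_id θ).const_mul m).add_const q
  exact hf.unique (haffine.congr_of_eventuallyEq (heq.eventuallyEq_of_mem hs))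

section ImplicitDifferentiation

variable {g g' g'' x : ℝ → ℝ} {s : Set ℝ} {m q θ : ℝ}

theorem mul_deriv_eq_of_eqOn_affine (hs : IsOpen s) (hθ : θ ∈ s)
    (hgx : EqOn (g ∘ x) (fun u => m * u + q) s) (hg : HasDerivAt g (g' (x θ)) (x θ))
    (hx : DifferentiableAt ℝ x θ) : g' (x θ) * deriv x θ = m :=
  (hg.comp θ hx.hasDerivAt).eq_of_eqOn_affine (hs.mem_nhds hθ) hgx

theorem second_deriv_identity_of_eqOn_affine (hs : IsOpen s) (hθ : θ ∈ s)
    (hgx : EqOn (g ∘ x) (fun u => m * u + q) s) (hg : ∀ u ∈ s, HasDerivAt g (g' (x u)) (x u))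
    (hg' : HasDerivAt g' (g'' (x θ)) (x θ)) (hx : ∀ u ∈ s, DifferentiableAt ℝ x u)
    (hx' : DifferentiableAt ℝ (deriv x) θ) :
    g'' (x θ) * deriv x θ ^ 2 + g' (x θ) * deriv (deriv x) θ = 0 := by
  have hconst : EqOn (fun u => g' (x u) * deriv x u) (fun u => 0 * u + m) s := fun u hu => by
    simpa using mul_deriv_eq_of_eqOn_affine hs hu hgx (hg u hu) (hx u hu)
  have hderiv := ((hg'.comp θ (hx θ hθ).hasDerivAt).mul hx'.hasDerivAt)
  rw [← hderiv.eq_of_eqOn_affine (hs.mem_nhds hθ) hconst]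
  simp only [Function.comp_apply]
  ring

end ImplicitDifferentiation

theorem neg_of_mul_sq_add_mul_eq_zero {a b d e : ℝ} (ha : a < 0) (hb : b < 0) (hd : d ≠ 0)
    (h : b * d ^ 2 + a * e = 0) : e < 0 := by
  have hpos : 0 < a * e := by linarith [mul_neg_of_neg_of_pos hb (sq_pos_of_ne_zero hd)]
  exact neg_of_mul_pos_right hpos ha.le

theorem best_response_second_deriv_theta_neg_general (α β τ σe t c p a b : ℝ) (x : ℝ → ℝ)
    (hα0 : 0 < α) (hτ : 0 < τ) (hσe : 0 < σe) (hp : 0 < p)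
    (hmem : ∀ θ ∈ Set.Ioo a b, x θ ∈ Set.Ioo (0 : ℝ) 1)
    (hdiff : ∀ θ ∈ Set.Ioo a b, DifferentiableAt ℝ x θ)
    (hdiff2 : ∀ θ ∈ Set.Ioo a b, DifferentiableAt ℝ (deriv x) θ)
    (hFOC : ∀ θ ∈ Set.Ioo a b,
      τ * σe * x θ ^ (-α) - τ * σe * t ^ (1 - β) / (1 - β) * (1 - x θ) ^ (-α)
        + c - (1 - θ) * p = 0)
    (hcond : ∀ θ ∈ Set.Ioo a b,
      0 < -(x θ ^ (-α - 2)) + t ^ (1 - β) / (1 - β) * (1 - x θ) ^ (-α - 2)) :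
    ∀ θ ∈ Set.Ioo a b, deriv (deriv x) θ < 0 := by
  intro θ hθ
  set k := t ^ (1 - β) / (1 - β)
  set A := τ * σe
  have hA : 0 < A := mul_pos hτ hσe
  have hy := hmem θ hθ
  have hk : 0 < k := by
    have hx_pow := Real.rpow_pos_of_pos hy.1 (-α - 2)
    exact pos_of_mul_pos_left (by linarith [hcond θ hθ])
      (Real.rpow_pos_of_pos (sub_pos.2 hy.2) _).le
  have hgx : EqOn (rpowPair A (-(A * k)) (-α) ∘ x) (fun u => -p * u + (p - c)) (Ioo a b) :=
    fun u hu => by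
      simp only [Function.comp_apply, rpowPair]
      linear_combination hFOC u hu
  have hg := fun u (hu : u ∈ Ioo a b) => hasDerivAt_rpowPair A (-(A * k)) (-α) (hmem u hu)
  have hfirst := mul_deriv_eq_of_eqOn_affine isOpen_Ioo hθ hgx (hg θ hθ) (hdiff θ hθ)
  have hsecond := second_deriv_identity_of_eqOn_affine isOpen_Ioo hθ hgx hg
    (hasDerivAt_rpowPair _ _ _ hy) hdiff (hdiff2 θ hθ)
  refine neg_of_mul_sq_add_mul_eq_zero ?_ ?_ ?_ hsecond
  · exact rpowPair_neg (by linarith [mul_pos hα0 hA])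
      (by linarith [mul_pos hα0 (mul_pos hA hk)]) hy
  · have hconcave := mul_pos (mul_pos (mul_pos hα0 (by linarith : 0 < α + 1)) hA) (hcond θ hθ)
    unfold rpowPair
    rw [show -α - 1 - 1 = -α - 2 by ring]
    linarith
  · exact right_ne_zero_of_mul (hfirst ▸ neg_ne_zero.2 hp.ne')

/-- Under the stated positivity condition, the mobile user's best response to
the sponsorship factor `θ` has strictly negative second derivative. -/
theorem best_response_second_deriv_theta_neg (α β τ σe t c p a b : ℝ) (x : ℝ → ℝ)
    (hα0 : 0 < α) (hα1 : α < 1) (hβ0 : 0 < β) (hβ1 : β < 1)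
    (hτ : 0 < τ) (hσe : 0 < σe) (ht : 0 < t) (hp : 0 < p)
    (hmem : ∀ θ ∈ Set.Ioo a b, x θ ∈ Set.Ioo (0 : ℝ) 1)
    (hdiff : ∀ θ ∈ Set.Ioo a b, DifferentiableAt ℝ x θ)
    (hdiff2 : ∀ θ ∈ Set.Ioo a b, DifferentiableAt ℝ (deriv x) θ)
    (hFOC : ∀ θ ∈ Set.Ioo a b,
      τ * σe * x θ ^ (-α) - τ * σe * t ^ (1 - β) / (1 - β) * (1 - x θ) ^ (-α)
        + c - (1 - θ) * p = 0)
    (hcond : ∀ θ ∈ Set.Ioo a b,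
      0 < -(x θ ^ (-α - 2)) + t ^ (1 - β) / (1 - β) * (1 - x θ) ^ (-α - 2)) :
    ∀ θ ∈ Set.Ioo a b, deriv (deriv x) θ < 0 :=
  best_response_second_deriv_theta_neg_general α β τ σe t c p a b x hα0 hτ hσe hp hmem hdiff hdiff2
    hFOC hcond
end

section
/- (Proposition 2, SCSP part) Let 0 < α < 1, 0 < β < 1, 0 < γ < 1, τ > 0, σ_e > 0, σ_c > 0, t > 0, p > 0, and c be real. Let I ⊆ ℝ be an open interval and x : I → (0,1) a twice differentiable function satisfying, for every θ ∈ I, the identity τσ_e·x(θ)^{−α} − (τσ_e·t^{1−β}/(1−β))·(1−x(θ))^{−α} + c − (1−θ)p = 0. If for every θ ∈ I both σ_c·x(θ)^{−γ} − θp > 0 and −x(θ)^{−α−2} + (t^{1−β}/(1−β))·(1−x(θ))^{−α−2} > 0 hold, then the sponsored content provider's profit Π_s(θ) = σ_c·x(θ)^{1−γ}/(1−γ) − θ·p·x(θ) has strictly negative second derivative at every θ ∈ I; i.e., Π_s is strictly concave on I. -/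
/-- (Proposition 2, SCSP part) Under the stated conditions, the sponsored
content provider's profit `Π_s(θ) = σ_c x(θ)^(1-γ)/(1-γ) - θ p x(θ)` has
strictly negative second derivative on `I`, i.e., it is strictly concave. -/
theorem scsp_profit_strictly_concave (α β γ τ σe σc t c p a b : ℝ) (x : ℝ → ℝ)
    (hα0 : 0 < α) (hα1 : α < 1) (hβ0 : 0 < β) (hβ1 : β < 1)
    (hγ0 : 0 < γ) (hγ1 : γ < 1)
    (hτ : 0 < τ) (hσe : 0 < σe) (hσc : 0 < σc) (ht : 0 < t) (hp : 0 < p)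
    (hmem : ∀ θ ∈ Set.Ioo a b, x θ ∈ Set.Ioo (0 : ℝ) 1)
    (hdiff : ∀ θ ∈ Set.Ioo a b, DifferentiableAt ℝ x θ)
    (hdiff2 : ∀ θ ∈ Set.Ioo a b, DifferentiableAt ℝ (deriv x) θ)
    (hFOC : ∀ θ ∈ Set.Ioo a b,
      τ * σe * x θ ^ (-α) - τ * σe * t ^ (1 - β) / (1 - β) * (1 - x θ) ^ (-α)
        + c - (1 - θ) * p = 0)
    (hcond1 : ∀ θ ∈ Set.Ioo a b, 0 < σc * x θ ^ (-γ) - θ * p)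
    (hcond2 : ∀ θ ∈ Set.Ioo a b,
      0 < -(x θ ^ (-α - 2)) + t ^ (1 - β) / (1 - β) * (1 - x θ) ^ (-α - 2)) :
    (∀ θ ∈ Set.Ioo a b,
      deriv (deriv (fun θ : ℝ => σc * x θ ^ (1 - γ) / (1 - γ) - θ * p * x θ)) θ < 0) ∧
    StrictConcaveOn ℝ (Set.Ioo a b)
      (fun θ : ℝ => σc * x θ ^ (1 - γ) / (1 - γ) - θ * p * x θ) := by
  have h1γ : (0:ℝ) < 1 - γ := by linarith
  have h1β : (0:ℝ) < 1 - β := by linarith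
  have hDpos : 0 < t ^ (1 - β) / (1 - β) :=
    div_pos (Real.rpow_pos_of_pos ht _) h1β
  -- derivative of the FOC function at each point of the interval
  have hE : ∀ φ ∈ Set.Ioo a b, HasDerivAt
      (fun s => τ * σe * x s ^ (-α) - τ * σe * t ^ (1 - β) / (1 - β) * (1 - x s) ^ (-α)
        + c - (1 - s) * p)
      (τ * σe * (deriv x φ * -α * x φ ^ (-α - 1))
        - τ * σe * t ^ (1 - β) / (1 - β) * (-deriv x φ * -α * (1 - x φ) ^ (-α - 1))
        - (0 - 1) * p) φ := by
    intro φ hφ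
    obtain ⟨hx0, hx1⟩ := hmem φ hφ
    have hx := (hdiff φ hφ).hasDerivAt
    have h1 := (hx.rpow_const (p := -α) (Or.inl (ne_of_gt hx0))).const_mul (τ * σe)
    have h2 := ((hx.const_sub 1).rpow_const (p := -α)
        (Or.inl (ne_of_gt (by linarith : (0:ℝ) < 1 - x φ)))).const_mul
        (τ * σe * t ^ (1 - β) / (1 - β))
    have h3 := ((hasDerivAt_const φ (1:ℝ)).sub (hasDerivAt_id φ)).mul_const p
    exact ((h1.sub h2).add_const c).sub h3
  -- the derivative of the FOC function vanishes on the interval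
  have hE0 : ∀ φ ∈ Set.Ioo a b,
      τ * σe * (deriv x φ * -α * x φ ^ (-α - 1))
        - τ * σe * t ^ (1 - β) / (1 - β) * (-deriv x φ * -α * (1 - x φ) ^ (-α - 1))
        - (0 - 1) * p = 0 := by
    intro φ hφ
    have heq : (fun s => τ * σe * x s ^ (-α)
        - τ * σe * t ^ (1 - β) / (1 - β) * (1 - x s) ^ (-α)
        + c - (1 - s) * p) =ᶠ[nhds φ] fun _ => (0:ℝ) := by
      filter_upwards [isOpen_Ioo.mem_nhds hφ] with s hs using hFOC s hs
    have h1 := (hE φ hφ).deriv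
    rw [heq.deriv_eq, deriv_const] at h1
    exact h1.symm
  -- positivity of x'
  have hx'pos : ∀ φ ∈ Set.Ioo a b, 0 < deriv x φ := by
    intro φ hφ
    obtain ⟨hx0, hx1⟩ := hmem φ hφ
    have hP1 : 0 < x φ ^ (-α - 1) := Real.rpow_pos_of_pos hx0 _
    have hQ1 : 0 < (1 - x φ) ^ (-α - 1) := Real.rpow_pos_of_pos (by linarith) _
    have hkey : (τ * σe * α) *
        ((x φ ^ (-α - 1) + t ^ (1 - β) / (1 - β) * (1 - x φ) ^ (-α - 1)) * deriv x φ)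
        = p := by linear_combination -(hE0 φ hφ)
    have hA : 0 < τ * σe * α := by positivity
    have hS : 0 < x φ ^ (-α - 1) + t ^ (1 - β) / (1 - β) * (1 - x φ) ^ (-α - 1) := by
      positivity
    by_contra h
    push_neg at h
    nlinarith [mul_nonneg hA.le (mul_nonneg hS.le (neg_nonneg.mpr h))]
  -- negativity of x''
  have hx''neg : ∀ θ ∈ Set.Ioo a b, deriv (deriv x) θ < 0 := by
    intro θ hθ
    obtain ⟨hx0, hx1⟩ := hmem θ hθ
    have h1x : (0:ℝ) < 1 - x θ := by linarith
    have hx := (hdiff θ hθ).hasDerivAt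
    have hx2 := (hdiff2 θ hθ).hasDerivAt
    have hEd : HasDerivAt (fun s => τ * σe * (deriv x s * -α * x s ^ (-α - 1))
        - τ * σe * t ^ (1 - β) / (1 - β) * (-deriv x s * -α * (1 - x s) ^ (-α - 1))
        - (0 - 1) * p)
        (τ * σe * ((deriv (deriv x) θ * -α) * x θ ^ (-α - 1)
            + (deriv x θ * -α) * (deriv x θ * (-α - 1) * x θ ^ (-α - 1 - 1)))
          - τ * σe * t ^ (1 - β) / (1 - β) *
            ((-deriv (deriv x) θ * -α) * (1 - x θ) ^ (-α - 1)
            + (-deriv x θ * -α) * (-deriv x θ * (-α - 1) * (1 - x θ) ^ (-α - 1 - 1)))) θ := by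
      have h1 := ((hx2.mul_const (-α)).mul
          (hx.rpow_const (p := -α - 1) (Or.inl (ne_of_gt hx0)))).const_mul (τ * σe)
      have h2 := ((hx2.neg.mul_const (-α)).mul
          ((hx.const_sub 1).rpow_const (p := -α - 1) (Or.inl (ne_of_gt h1x)))).const_mul
          (τ * σe * t ^ (1 - β) / (1 - β))
      exact (h1.sub h2).sub_const ((0 - 1) * p)
    have heq2 : (fun s => τ * σe * (deriv x s * -α * x s ^ (-α - 1))
        - τ * σe * t ^ (1 - β) / (1 - β) * (-deriv x s * -α * (1 - x s) ^ (-α - 1))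
        - (0 - 1) * p) =ᶠ[nhds θ] fun _ => (0:ℝ) := by
      filter_upwards [isOpen_Ioo.mem_nhds hθ] with s hs using hE0 s hs
    have hEq2 := hEd.deriv
    rw [heq2.deriv_eq, deriv_const] at hEq2
    rw [show -α - 1 - 1 = -α - 2 by ring] at hEq2
    have hP1 : 0 < x θ ^ (-α - 1) := Real.rpow_pos_of_pos hx0 _
    have hQ1 : 0 < (1 - x θ) ^ (-α - 1) := Real.rpow_pos_of_pos h1x _
    have hC2 := hcond2 θ hθ
    have hx' := hx'pos θ hθ
    have hkey2 : (τ * σe * α) *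
        ((x θ ^ (-α - 1) + t ^ (1 - β) / (1 - β) * (1 - x θ) ^ (-α - 1))
          * deriv (deriv x) θ)
        = -((τ * σe * α * (α + 1)) * (deriv x θ * deriv x θ) *
            (-(x θ ^ (-α - 2)) + t ^ (1 - β) / (1 - β) * (1 - x θ) ^ (-α - 2))) := by
      linear_combination hEq2
    have hA : 0 < τ * σe * α := by positivity
    have hS : 0 < x θ ^ (-α - 1) + t ^ (1 - β) / (1 - β) * (1 - x θ) ^ (-α - 1) := by
      positivity
    have hT : 0 < (τ * σe * α * (α + 1)) * (deriv x θ * deriv x θ) *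
        (-(x θ ^ (-α - 2)) + t ^ (1 - β) / (1 - β) * (1 - x θ) ^ (-α - 2)) :=
      mul_pos (mul_pos (by positivity) (mul_pos hx' hx')) hC2
    by_contra h
    push_neg at h
    have hnn : 0 ≤ (τ * σe * α) *
        ((x θ ^ (-α - 1) + t ^ (1 - β) / (1 - β) * (1 - x θ) ^ (-α - 1))
          * deriv (deriv x) θ) :=
      mul_nonneg hA.le (mul_nonneg hS.le h)
    linarith
  -- derivative of the profit function at each point
  have hf' : ∀ φ ∈ Set.Ioo a b,
      HasDerivAt (fun θ : ℝ => σc * x θ ^ (1 - γ) / (1 - γ) - θ * p * x θ)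
        (σc * (deriv x φ * (1 - γ) * x φ ^ (1 - γ - 1)) / (1 - γ)
          - (1 * p * x φ + φ * p * deriv x φ)) φ := by
    intro φ hφ
    have hx := (hdiff φ hφ).hasDerivAt
    have h1 := ((hx.rpow_const (p := 1 - γ) (Or.inl (ne_of_gt (hmem φ hφ).1))).const_mul σc).div_const
        (1 - γ)
    have h2 := ((hasDerivAt_id φ).mul_const p).mul hx
    exact h1.sub h2
  -- second derivative of the profit is negative
  have key : ∀ θ ∈ Set.Ioo a b,
      deriv (deriv (fun θ : ℝ => σc * x θ ^ (1 - γ) / (1 - γ) - θ * p * x θ)) θ < 0 := by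
    intro θ hθ
    obtain ⟨hx0, hx1⟩ := hmem θ hθ
    have hx := (hdiff θ hθ).hasDerivAt
    have hx2 := (hdiff2 θ hθ).hasDerivAt
    have heq : deriv (fun θ : ℝ => σc * x θ ^ (1 - γ) / (1 - γ) - θ * p * x θ)
        =ᶠ[nhds θ] (fun s => σc * (deriv x s * (1 - γ) * x s ^ (1 - γ - 1)) / (1 - γ)
          - (1 * p * x s + s * p * deriv x s)) := by
      filter_upwards [isOpen_Ioo.mem_nhds hθ] with s hs using (hf' s hs).deriv
    rw [heq.deriv_eq]
    have hF : HasDerivAt (fun s => σc * (deriv x s * (1 - γ) * x s ^ (1 - γ - 1)) / (1 - γ)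
        - (1 * p * x s + s * p * deriv x s))
        (σc * ((deriv (deriv x) θ * (1 - γ)) * x θ ^ (1 - γ - 1)
            + (deriv x θ * (1 - γ)) * (deriv x θ * (1 - γ - 1) * x θ ^ (1 - γ - 1 - 1)))
          / (1 - γ)
          - (1 * p * deriv x θ
            + (1 * p * deriv x θ + θ * p * deriv (deriv x) θ))) θ := by
      have h1 := (((hx2.mul_const (1 - γ)).mul
          (hx.rpow_const (p := 1 - γ - 1) (Or.inl (ne_of_gt hx0)))).const_mul σc).div_const (1 - γ)
      have h2 := (hx.const_mul (1 * p)).add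
          (((hasDerivAt_id θ).mul_const p).mul hx2)
      exact h1.sub h2
    rw [hF.deriv]
    rw [show (1:ℝ) - γ - 1 = -γ by ring]
    have hfin : σc * ((deriv (deriv x) θ * (1 - γ)) * x θ ^ (-γ)
            + (deriv x θ * (1 - γ)) * (deriv x θ * (-γ) * x θ ^ (-γ - 1))) / (1 - γ)
          - (1 * p * deriv x θ + (1 * p * deriv x θ + θ * p * deriv (deriv x) θ))
        = (σc * x θ ^ (-γ) - θ * p) * deriv (deriv x) θ
          - γ * σc * x θ ^ (-γ - 1) * (deriv x θ * deriv x θ) - 2 * p * deriv x θ := by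
      field_simp
      ring
    rw [hfin]
    have hc1 := hcond1 θ hθ
    have hx'' := hx''neg θ hθ
    have hx' := hx'pos θ hθ
    have hPm1 : 0 < x θ ^ (-γ - 1) := Real.rpow_pos_of_pos hx0 _
    have t1 : (σc * x θ ^ (-γ) - θ * p) * deriv (deriv x) θ < 0 :=
      mul_neg_of_pos_of_neg hc1 hx''
    have t2 : 0 < γ * σc * x θ ^ (-γ - 1) * (deriv x θ * deriv x θ) :=
      mul_pos (by positivity) (mul_pos hx' hx')
    have t3 : 0 < 2 * p * deriv x θ := by positivity
    linarith
  refine ⟨key, strictConcaveOn_of_deriv2_neg (convex_Ioo a b) ?_ ?_⟩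
  · intro φ hφ
    exact (hf' φ hφ).differentiableAt.continuousAt.continuousWithinAt
  · intro φ hφ
    rw [interior_Ioo] at hφ
    have h := key φ hφ
    simpa [Function.iterate_succ, Function.iterate_zero, Function.comp] using h
end

section
/- Let 0 < α < 1, 0 < β < 1, τ > 0, σ_e > 0, p > 0, and c, θ be real. Let I ⊆ (0,∞) be an open interval and x : I → (0,1) a differentiable function satisfying, for every t ∈ I, the identity τσ_e·x(t)^{−α} − (τσ_e·t^{1−β}/(1−β))·(1−x(t))^{−α} + c − (1−θ)p = 0. Then for every t ∈ I, x'(t) = −t^{−β}·(1−x(t))^{−α} / ( α·[ x(t)^{−α−1} + (t^{1−β}/(1−β))·(1−x(t))^{−α−1} ] ), and in particular x'(t) < 0. -/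
/-!
Differentiate the first-order condition along the curve `t ↦ (t, x t)`: since it holds on an open
interval, the derivative of its left-hand side vanishes, which gives the linear equation
`α x' [x^(-α-1) + t^(1-β)/(1-β) (1-x)^(-α-1)] + t^(-β) (1-x)^(-α) = 0` for `x'`.
Both the coefficient of `x'` and the constant term are positive, so `x'` is the stated negative quotient.
-/

open Filter Real

lemma hasDerivAt_rpow_one_sub_div_one_sub {β t : ℝ} (hβ : β ≠ 1) (ht : t ≠ 0) :
    HasDerivAt (fun s : ℝ => s ^ (1 - β) / (1 - β)) (t ^ (-β)) t := by
  have h := (Real.hasDerivAt_rpow_const (p := 1 - β) (Or.inl ht)).div_const (1 - β)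
  rwa [show 1 - β - 1 = -β by ring, mul_div_cancel_left₀ _ (sub_ne_zero.2 hβ.symm)] at h

lemma hasDerivAt_bestResponseFOC {α β τ σe c p θ t x' : ℝ} {x : ℝ → ℝ}
    (hx : HasDerivAt x x' t) (hβ : β ≠ 1) (ht : t ≠ 0) (hx0 : x t ≠ 0) (hx1 : 1 - x t ≠ 0) :
    HasDerivAt
      (fun s => τ * σe * x s ^ (-α) - τ * σe * s ^ (1 - β) / (1 - β) * (1 - x s) ^ (-α)
        + c - (1 - θ) * p)
      (-(τ * σe) * (α * x' * (x t ^ (-α - 1) + t ^ (1 - β) / (1 - β) * (1 - x t) ^ (-α - 1))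
        + t ^ (-β) * (1 - x t) ^ (-α))) t := by
  have hxα := hx.rpow_const (p := -α) (Or.inl hx0)
  have honexα := (hx.const_sub 1).rpow_const (p := -α) (Or.inl hx1)
  have hpow := (hasDerivAt_rpow_one_sub_div_one_sub hβ ht).mul honexα
  have h := (((hxα.const_mul (τ * σe)).sub (hpow.const_mul (τ * σe))).add_const c).sub_const
    ((1 - θ) * p)
  refine (h.congr_deriv (by ring)).congr_of_eventuallyEq (.of_forall fun s => ?_)
  simp only [Pi.sub_apply, Pi.mul_apply]
  ring

theorem best_response_deriv_t_general (α β τ σe c p θ a b : ℝ) (x : ℝ → ℝ)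
    (hα0 : 0 < α) (hβ1 : β < 1)
    (hτ : 0 < τ) (hσe : 0 < σe)
    (hI : Set.Ioo a b ⊆ Set.Ioi (0 : ℝ))
    (hmem : ∀ t ∈ Set.Ioo a b, x t ∈ Set.Ioo (0 : ℝ) 1)
    (hdiff : ∀ t ∈ Set.Ioo a b, DifferentiableAt ℝ x t)
    (hFOC : ∀ t ∈ Set.Ioo a b,
      τ * σe * x t ^ (-α) - τ * σe * t ^ (1 - β) / (1 - β) * (1 - x t) ^ (-α)
        + c - (1 - θ) * p = 0) :
    ∀ t ∈ Set.Ioo a b,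
      deriv x t
        = -(t ^ (-β) * (1 - x t) ^ (-α))
            / (α * (x t ^ (-α - 1) + t ^ (1 - β) / (1 - β) * (1 - x t) ^ (-α - 1))) ∧
      deriv x t < 0 := by
  intro t ht
  obtain ⟨hx0, hx1⟩ := hmem t ht
  have ht0 : 0 < t := hI ht
  have hx1' : 0 < 1 - x t := sub_pos.2 hx1
  have hβ' : 0 < 1 - β := sub_pos.2 hβ1
  set D := x t ^ (-α - 1) + t ^ (1 - β) / (1 - β) * (1 - x t) ^ (-α - 1)
  set N := t ^ (-β) * (1 - x t) ^ (-α)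
  have hD : 0 < α * D := mul_pos hα0 <| add_pos (rpow_pos_of_pos hx0 _)
    (mul_pos (div_pos (rpow_pos_of_pos ht0 _) hβ') (rpow_pos_of_pos hx1' _))
  have hN : 0 < N := mul_pos (rpow_pos_of_pos ht0 _) (rpow_pos_of_pos hx1' _)
  have hconst := (hasDerivAt_const t (0 : ℝ)).congr_of_eventuallyEq
    (eventually_of_mem (isOpen_Ioo.mem_nhds ht) hFOC)
  have hzero : α * deriv x t * D + N = 0 := by
    simpa [hτ.ne', hσe.ne'] using (hasDerivAt_bestResponseFOC (hdiff t ht).hasDerivAt hβ1.ne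
      ht0.ne' hx0.ne' hx1'.ne').unique hconst
  have hformula : deriv x t = -N / (α * D) := by
    rw [eq_div_iff hD.ne']
    linarith
  exact ⟨hformula, hformula ▸ div_neg_of_neg_of_pos (neg_neg_of_pos hN) hD⟩

/-- Implicit first derivative of the mobile user's best response with respect
to the caching effort `t`:
`x'(t) = -t^(-β)(1-x)^(-α) / (α [x^(-α-1) + (t^(1-β)/(1-β))(1-x)^(-α-1)]) < 0`. -/
theorem best_response_deriv_t (α β τ σe c p θ a b : ℝ) (x : ℝ → ℝ)
    (hα0 : 0 < α) (hα1 : α < 1) (hβ0 : 0 < β) (hβ1 : β < 1)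
    (hτ : 0 < τ) (hσe : 0 < σe) (hp : 0 < p)
    (hI : Set.Ioo a b ⊆ Set.Ioi (0 : ℝ))
    (hmem : ∀ t ∈ Set.Ioo a b, x t ∈ Set.Ioo (0 : ℝ) 1)
    (hdiff : ∀ t ∈ Set.Ioo a b, DifferentiableAt ℝ x t)
    (hFOC : ∀ t ∈ Set.Ioo a b,
      τ * σe * x t ^ (-α) - τ * σe * t ^ (1 - β) / (1 - β) * (1 - x t) ^ (-α)
        + c - (1 - θ) * p = 0) :
    ∀ t ∈ Set.Ioo a b,
      deriv x t
        = -(t ^ (-β) * (1 - x t) ^ (-α))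
            / (α * (x t ^ (-α - 1) + t ^ (1 - β) / (1 - β) * (1 - x t) ^ (-α - 1))) ∧
      deriv x t < 0 :=
  best_response_deriv_t_general α β τ σe c p θ a b x hα0 hβ1 hτ hσe hI hmem hdiff hFOC
end

section
/- Let 0 < α < 1, 0 < β < 1, 0 < γ < 1 with γ + α − 1 > 0, τ > 0, σ_e > 0, p > 0, and c, θ be real. Let I ⊆ (0,∞) be an open interval and x : I → (0,1) a twice differentiable function satisfying, for every t ∈ I, the identity τσ_e·x(t)^{−α} − (τσ_e·t^{1−β}/(1−β))·(1−x(t))^{−α} + c − (1−θ)p = 0. Then for every t ∈ I, γ·(1−x(t))^{−1}·(x'(t))² + x''(t) > 0. -/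
/-!
Write the first-order condition as `k x^(-α) - t^k (1 - x)^(-α) = const` with `k = 1 - β` and
differentiate it twice in `t`. With `D = k α x^(-α) / x + α t^k (1 - x)^(-α) / (1 - x) > 0`,
using the first derivative to eliminate the mixed term `x' t^k / t` from the second one gives
  `D (γ x'^2 / (1 - x) + x'') = (γ + α - 1) D x'^2 / (1 - x)`
    `+ k α (α + 1) x^(-α) / x (1 / (1 - x) + 1 / x) x'^2 + k (1 - k) t^k (1 - x)^(-α) / t^2`,
where every term on the right is nonnegative, and the last one positive, because
`γ + α - 1 > 0` and `0 < k < 1`.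
-/

open Filter

theorem HasDerivAt.eq_zero_of_eqOn_const {f : ℝ → ℝ} {f' K t : ℝ} {s : Set ℝ}
    (hs : IsOpen s) (hK : ∀ y ∈ s, f y = K) (ht : t ∈ s) (hf : HasDerivAt f f' t) : f' = 0 :=
  hf.unique <| (hasDerivAt_const t K).congr_of_eventuallyEq <|
    eventually_of_mem (hs.mem_nhds ht) hK

namespace Real

theorem hasDerivAt_rpow_const_div {r u : ℝ} (hu : u ≠ 0) :
    HasDerivAt (· ^ r) (r * u ^ r / u) u := by
  simpa only [rpow_sub_one hu, mul_div_assoc] using hasDerivAt_rpow_const (p := r) (Or.inl hu)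

theorem hasDerivAt_mul_rpow_div_self {r u : ℝ} (hu : u ≠ 0) :
    HasDerivAt (fun v => r * v ^ r / v) (r * (r - 1) * u ^ r / u ^ 2) u := by
  refine (((hasDerivAt_rpow_const_div hu).const_mul r).div (hasDerivAt_id' u) hu).congr_deriv ?_
  field_simp

theorem hasDerivAt_one_sub_rpow_const {r u : ℝ} (hu : u ≠ 1) :
    HasDerivAt (fun v => (1 - v) ^ r) (-(r * (1 - u) ^ r / (1 - u))) u :=
  ((hasDerivAt_rpow_const_div (sub_ne_zero.2 hu.symm)).comp u
    ((hasDerivAt_id' u).const_sub 1)).congr_deriv (by ring)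

theorem hasDerivAt_neg_mul_one_sub_rpow_div {r u : ℝ} (hu : u ≠ 1) :
    HasDerivAt (fun v => -(r * (1 - v) ^ r / (1 - v)))
      (r * (r - 1) * (1 - u) ^ r / (1 - u) ^ 2) u :=
  ((hasDerivAt_mul_rpow_div_self (sub_ne_zero.2 hu.symm)).comp u
    ((hasDerivAt_id' u).const_sub 1)).neg.congr_deriv (by ring)

end Real

section SeparableRelation

variable {s S : Set ℝ} {x φ φ' φ'' g g' g'' h h' h'' : ℝ → ℝ} {K : ℝ}

theorem implicit_deriv_of_separable_relation (hs : IsOpen s)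
    (hx : ∀ t ∈ s, DifferentiableAt ℝ x t) (hxS : ∀ t ∈ s, x t ∈ S)
    (hφ : ∀ t ∈ s, HasDerivAt φ (φ' t) t)
    (hg : ∀ u ∈ S, HasDerivAt g (g' u) u) (hh : ∀ u ∈ S, HasDerivAt h (h' u) u)
    (hrel : ∀ t ∈ s, g (x t) - φ t * h (x t) = K) {t : ℝ} (ht : t ∈ s) :
    g' (x t) * deriv x t - φ' t * h (x t) - φ t * h' (x t) * deriv x t = 0 := by
  have hx₁ := (hx t ht).hasDerivAt
  have hd : HasDerivAt (fun t => g (x t) - φ t * h (x t)) _ t :=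
    ((hg _ (hxS t ht)).comp t hx₁).sub ((hφ t ht).mul ((hh _ (hxS t ht)).comp t hx₁))
  linear_combination hd.eq_zero_of_eqOn_const hs hrel ht

theorem implicit_deriv_deriv_of_separable_relation (hs : IsOpen s)
    (hx : ∀ t ∈ s, DifferentiableAt ℝ x t)
    (hx' : ∀ t ∈ s, DifferentiableAt ℝ (deriv x) t) (hxS : ∀ t ∈ s, x t ∈ S)
    (hφ : ∀ t ∈ s, HasDerivAt φ (φ' t) t) (hφ' : ∀ t ∈ s, HasDerivAt φ' (φ'' t) t)
    (hg : ∀ u ∈ S, HasDerivAt g (g' u) u) (hg' : ∀ u ∈ S, HasDerivAt g' (g'' u) u)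
    (hh : ∀ u ∈ S, HasDerivAt h (h' u) u) (hh' : ∀ u ∈ S, HasDerivAt h' (h'' u) u)
    (hrel : ∀ t ∈ s, g (x t) - φ t * h (x t) = K) {t : ℝ} (ht : t ∈ s) :
    g'' (x t) * deriv x t ^ 2 + g' (x t) * deriv (deriv x) t - φ'' t * h (x t)
      - 2 * φ' t * h' (x t) * deriv x t
      - φ t * (h'' (x t) * deriv x t ^ 2 + h' (x t) * deriv (deriv x) t) = 0 := by
  have hx₁ := (hx t ht).hasDerivAt
  have hx₂ := (hx' t ht).hasDerivAt
  have hd : HasDerivAt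
      (fun t => g' (x t) * deriv x t - (φ' t * h (x t) + φ t * h' (x t) * deriv x t)) _ t :=
    (((hg' _ (hxS t ht)).comp t hx₁).mul hx₂).sub
      (((hφ' t ht).mul ((hh _ (hxS t ht)).comp t hx₁)).add
        (((hφ t ht).mul ((hh' _ (hxS t ht)).comp t hx₁)).mul hx₂))
  simp only [Function.comp_apply, Pi.mul_apply] at hd
  have hfirst (t) (ht : t ∈ s) := implicit_deriv_of_separable_relation hs hx hxS hφ hg hh hrel ht
  linear_combination hd.eq_zero_of_eqOn_const hs (K := 0)
    (fun t ht => by linear_combination hfirst t ht) ht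

end SeparableRelation

theorem key_expression_pos_of_implicit_eqs {α γ k P Q R u v t y₁ y₂ : ℝ} (hα : 0 < α)
    (hk₀ : 0 < k) (hk₁ : k < 1) (hγα : 0 < γ + α - 1) (hP : 0 < P) (hQ : 0 < Q) (hR : 0 < R)
    (hu : 0 < u) (hv : 0 < v) (ht : 0 < t)
    (h₁ : k * (-α * P / u) * y₁ - k * R / t * Q - R * (α * Q / v) * y₁ = 0)
    (h₂ : k * (α * (α + 1) * P / u ^ 2) * y₁ ^ 2 + k * (-α * P / u) * y₂
      - k * (k - 1) * R / t ^ 2 * Q - 2 * (k * R / t) * (α * Q / v) * y₁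
      - R * (α * (α + 1) * Q / v ^ 2 * y₁ ^ 2 + α * Q / v * y₂) = 0) :
    0 < γ * v⁻¹ * y₁ ^ 2 + y₂ := by
  set D := k * α * P / u + R * α * Q / v
  have hD : 0 < D := by positivity
  have key : D * (γ * v⁻¹ * y₁ ^ 2 + y₂) = (γ + α - 1) * D / v * y₁ ^ 2
      + k * α * (α + 1) * P / u * (1 / v + 1 / u) * y₁ ^ 2 + k * (1 - k) * (R * Q / t ^ 2) := by
    linear_combination (2 * α * y₁ / v) * h₁ - h₂
  have hterm₁ : 0 ≤ (γ + α - 1) * D / v * y₁ ^ 2 :=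
    mul_nonneg (div_nonneg (mul_pos hγα hD).le hv.le) (sq_nonneg y₁)
  have hterm₂ : 0 ≤ k * α * (α + 1) * P / u * (1 / v + 1 / u) * y₁ ^ 2 := by positivity
  have hterm₃ : 0 < k * (1 - k) * (R * Q / t ^ 2) :=
    mul_pos (mul_pos hk₀ (sub_pos.2 hk₁)) (by positivity)
  refine pos_of_mul_pos_right ?_ hD.le
  rw [key]
  exact add_pos_of_nonneg_of_pos (add_nonneg hterm₁ hterm₂) hterm₃

theorem eccsp_key_expression_pos_general (α β γ τ σe c p θ a b : ℝ) (x : ℝ → ℝ)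
    (hα0 : 0 < α) (hβ0 : 0 < β) (hβ1 : β < 1)
    (hsum : 0 < γ + α - 1)
    (hτ : 0 < τ) (hσe : 0 < σe)
    (hI : Set.Ioo a b ⊆ Set.Ioi (0 : ℝ))
    (hmem : ∀ t ∈ Set.Ioo a b, x t ∈ Set.Ioo (0 : ℝ) 1)
    (hdiff : ∀ t ∈ Set.Ioo a b, DifferentiableAt ℝ x t)
    (hdiff2 : ∀ t ∈ Set.Ioo a b, DifferentiableAt ℝ (deriv x) t)
    (hFOC : ∀ t ∈ Set.Ioo a b,
      τ * σe * x t ^ (-α) - τ * σe * t ^ (1 - β) / (1 - β) * (1 - x t) ^ (-α)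
        + c - (1 - θ) * p = 0) :
    ∀ t ∈ Set.Ioo a b,
      0 < γ * (1 - x t)⁻¹ * (deriv x t) ^ 2 + deriv (deriv x) t := by
  intro t ht
  have hk : 0 < 1 - β := sub_pos.2 hβ1
  have hrel : ∀ s ∈ Set.Ioo a b, (1 - β) * x s ^ (-α) - s ^ (1 - β) * (1 - x s) ^ (-α)
      = (1 - β) * ((1 - θ) * p - c) / (τ * σe) := fun s hs => by
    have hFOCs := hFOC s hs
    field_simp at hFOCs ⊢
    linear_combination hFOCs
  have hφ (s) (hs : s ∈ Set.Ioo a b) := Real.hasDerivAt_rpow_const_div (r := 1 - β) (hI hs).ne'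
  have hφ' (s) (hs : s ∈ Set.Ioo a b) :=
    Real.hasDerivAt_mul_rpow_div_self (r := 1 - β) (hI hs).ne'
  have hg (u) (hu : u ∈ Set.Ioo (0 : ℝ) 1) :=
    (Real.hasDerivAt_rpow_const_div (r := -α) hu.1.ne').const_mul (1 - β)
  have hg' (u) (hu : u ∈ Set.Ioo (0 : ℝ) 1) :=
    (Real.hasDerivAt_mul_rpow_div_self (r := -α) hu.1.ne').const_mul (1 - β)
  have hh (u) (hu : u ∈ Set.Ioo (0 : ℝ) 1) :=
    Real.hasDerivAt_one_sub_rpow_const (r := -α) hu.2.ne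
  have hh' (u) (hu : u ∈ Set.Ioo (0 : ℝ) 1) :=
    Real.hasDerivAt_neg_mul_one_sub_rpow_div (r := -α) hu.2.ne
  have h₁ := implicit_deriv_of_separable_relation isOpen_Ioo hdiff hmem hφ hg hh hrel ht
  have h₂ := implicit_deriv_deriv_of_separable_relation isOpen_Ioo hdiff hdiff2 hmem hφ hφ'
    hg hg' hh hh' hrel ht
  obtain ⟨hx₀, hx₁⟩ := hmem t ht
  exact key_expression_pos_of_implicit_eqs hα0 hk (sub_lt_self 1 hβ0) hsum
    (Real.rpow_pos_of_pos hx₀ _) (Real.rpow_pos_of_pos (sub_pos.2 hx₁) _)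
    (Real.rpow_pos_of_pos (hI ht) _) hx₀ (sub_pos.2 hx₁) (hI ht)
    (by linear_combination h₁) (by linear_combination h₂)

/-- The key expression `γ (1 - x(t))⁻¹ (x'(t))² + x''(t)` is strictly positive
along the mobile user's best response to the caching effort. -/
theorem eccsp_key_expression_pos (α β γ τ σe c p θ a b : ℝ) (x : ℝ → ℝ)
    (hα0 : 0 < α) (hα1 : α < 1) (hβ0 : 0 < β) (hβ1 : β < 1)
    (hγ0 : 0 < γ) (hγ1 : γ < 1) (hsum : 0 < γ + α - 1)
    (hτ : 0 < τ) (hσe : 0 < σe) (hp : 0 < p)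
    (hI : Set.Ioo a b ⊆ Set.Ioi (0 : ℝ))
    (hmem : ∀ t ∈ Set.Ioo a b, x t ∈ Set.Ioo (0 : ℝ) 1)
    (hdiff : ∀ t ∈ Set.Ioo a b, DifferentiableAt ℝ x t)
    (hdiff2 : ∀ t ∈ Set.Ioo a b, DifferentiableAt ℝ (deriv x) t)
    (hFOC : ∀ t ∈ Set.Ioo a b,
      τ * σe * x t ^ (-α) - τ * σe * t ^ (1 - β) / (1 - β) * (1 - x t) ^ (-α)
        + c - (1 - θ) * p = 0) :
    ∀ t ∈ Set.Ioo a b,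
      0 < γ * (1 - x t)⁻¹ * (deriv x t) ^ 2 + deriv (deriv x) t :=
  eccsp_key_expression_pos_general α β γ τ σe c p θ a b x hα0 hβ0 hβ1 hsum hτ hσe hI hmem hdiff
    hdiff2 hFOC
end

section
/- (Proposition 2, ECCSP part) Let 0 < α < 1, 0 < β < 1, 0 < γ < 1 with γ + α − 1 > 0, τ > 0, σ_e > 0, σ_c > 0, p > 0, and c, θ, C be real. Let I ⊆ (0,∞) be an open interval and x : I → (0,1) a twice differentiable function satisfying, for every t ∈ I, the identity τσ_e·x(t)^{−α} − (τσ_e·t^{1−β}/(1−β))·(1−x(t))^{−α} + c − (1−θ)p = 0. Then the edge caching provider's profit Π_e(t) = σ_c·(1−x(t))^{1−γ}/(1−γ) − C·t has strictly negative second derivative at every t ∈ I; i.e., Π_e is strictly concave on I. -/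
set_option maxHeartbeats 1000000 in
/-- (Proposition 2, ECCSP part) Under the stated conditions, the edge caching
provider's profit `Π_e(t) = σ_c (1 - x(t))^(1-γ)/(1-γ) - C t` has strictly
negative second derivative on `I`, i.e., it is strictly concave. -/
theorem eccsp_profit_strictly_concave (α β γ τ σe σc c p θ C a b : ℝ) (x : ℝ → ℝ)
    (hα0 : 0 < α) (hα1 : α < 1) (hβ0 : 0 < β) (hβ1 : β < 1)
    (hγ0 : 0 < γ) (hγ1 : γ < 1) (hsum : 0 < γ + α - 1)
    (hτ : 0 < τ) (hσe : 0 < σe) (hσc : 0 < σc) (hp : 0 < p)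
    (hI : Set.Ioo a b ⊆ Set.Ioi (0 : ℝ))
    (hmem : ∀ t ∈ Set.Ioo a b, x t ∈ Set.Ioo (0 : ℝ) 1)
    (hdiff : ∀ t ∈ Set.Ioo a b, DifferentiableAt ℝ x t)
    (hdiff2 : ∀ t ∈ Set.Ioo a b, DifferentiableAt ℝ (deriv x) t)
    (hFOC : ∀ t ∈ Set.Ioo a b,
      τ * σe * x t ^ (-α) - τ * σe * t ^ (1 - β) / (1 - β) * (1 - x t) ^ (-α)
        + c - (1 - θ) * p = 0) :
    (∀ t ∈ Set.Ioo a b,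
      deriv (deriv (fun t : ℝ => σc * (1 - x t) ^ (1 - γ) / (1 - γ) - C * t)) t < 0) ∧
    StrictConcaveOn ℝ (Set.Ioo a b)
      (fun t : ℝ => σc * (1 - x t) ^ (1 - γ) / (1 - γ) - C * t) := by
  have hb1 : (0:ℝ) < 1 - β := by linarith
  have hg1 : (0:ℝ) < 1 - γ := by linarith
  set f : ℝ → ℝ := fun t : ℝ => σc * (1 - x t) ^ (1 - γ) / (1 - γ) - C * t with hfdef
  -- Step 1: differentiated FOC identity on the interval
  have hE1 : ∀ s ∈ Set.Ioo a b,
      τ * σe * α * (x s ^ (-α - 1) * deriv x s)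
      + τ * σe * (s ^ (-β) * (1 - x s) ^ (-α))
      + τ * σe / (1 - β) * α * (s ^ (1 - β) * ((1 - x s) ^ (-α - 1) * deriv x s)) = 0 := by
    intro s hs
    have hs0 : 0 < s := hI hs
    obtain ⟨hx0, hx1⟩ := hmem s hs
    have hg0 : 0 < 1 - x s := by linarith
    have hx : HasDerivAt x (deriv x s) s := (hdiff s hs).hasDerivAt
    have h1 : HasDerivAt (fun s => x s ^ (-α))
        (deriv x s * -α * x s ^ (-α - 1)) s := hx.rpow_const (Or.inl hx0.ne')
    have h2 : HasDerivAt (fun s => 1 - x s) (-(deriv x s)) s := hx.const_sub 1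
    have h3 : HasDerivAt (fun s => (1 - x s) ^ (-α))
        (-(deriv x s) * -α * (1 - x s) ^ (-α - 1)) s := h2.rpow_const (Or.inl hg0.ne')
    have h4 : HasDerivAt (fun s : ℝ => s ^ (1 - β))
        ((1 - β) * s ^ (1 - β - 1)) s := Real.hasDerivAt_rpow_const (Or.inl hs0.ne')
    have h5 : HasDerivAt (fun s : ℝ => τ * σe * s ^ (1 - β) / (1 - β))
        (τ * σe * ((1 - β) * s ^ (1 - β - 1)) / (1 - β)) s :=
      (h4.const_mul (τ * σe)).div_const (1 - β)
    have hφ : HasDerivAt (fun s => τ * σe * x s ^ (-α)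
        - τ * σe * s ^ (1 - β) / (1 - β) * (1 - x s) ^ (-α) + c - (1 - θ) * p)
        (τ * σe * (deriv x s * -α * x s ^ (-α - 1))
          - (τ * σe * ((1 - β) * s ^ (1 - β - 1)) / (1 - β) * (1 - x s) ^ (-α)
            + τ * σe * s ^ (1 - β) / (1 - β)
              * (-(deriv x s) * -α * (1 - x s) ^ (-α - 1)))) s :=
      (((h1.const_mul (τ * σe)).sub (h5.mul h3)).add_const c).sub_const ((1 - θ) * p)
    have hev : (fun s => τ * σe * x s ^ (-α)
        - τ * σe * s ^ (1 - β) / (1 - β) * (1 - x s) ^ (-α) + c - (1 - θ) * p)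
        =ᶠ[nhds s] fun _ => (0:ℝ) := by
      filter_upwards [isOpen_Ioo.mem_nhds hs] with y hy using hFOC y hy
    have h0 : deriv (fun s => τ * σe * x s ^ (-α)
        - τ * σe * s ^ (1 - β) / (1 - β) * (1 - x s) ^ (-α) + c - (1 - θ) * p) s = 0 := by
      rw [hev.deriv_eq]; exact deriv_const s 0
    have rawEq := hφ.deriv.symm.trans h0
    rw [show (1:ℝ) - β - 1 = -β by ring] at rawEq
    rw [show τ * σe * ((1 - β) * s ^ (-β)) / (1 - β) = τ * σe * s ^ (-β) by
      field_simp] at rawEq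
    linear_combination -rawEq
  -- Step 3 (derivative of the profit): clean first derivative of f on the interval
  have hdf : ∀ s ∈ Set.Ioo a b,
      HasDerivAt f (-(σc * ((1 - x s) ^ (-γ) * deriv x s)) - C) s := by
    intro s hs
    obtain ⟨hx0, hx1⟩ := hmem s hs
    have hg0 : 0 < 1 - x s := by linarith
    have hx : HasDerivAt x (deriv x s) s := (hdiff s hs).hasDerivAt
    have h2 : HasDerivAt (fun s => 1 - x s) (-(deriv x s)) s := hx.const_sub 1
    have hraw : HasDerivAt f
        (σc * (-(deriv x s) * (1 - γ) * (1 - x s) ^ (1 - γ - 1)) / (1 - γ) - C * 1) s := by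
      rw [hfdef]
      exact (((h2.rpow_const (Or.inl hg0.ne')).const_mul σc).div_const (1 - γ)).sub
        ((hasDerivAt_id s).const_mul C)
    have hveq : σc * (-(deriv x s) * (1 - γ) * (1 - x s) ^ (1 - γ - 1)) / (1 - γ) - C * 1
        = -(σc * ((1 - x s) ^ (-γ) * deriv x s)) - C := by
      rw [show (1:ℝ) - γ - 1 = -γ by ring]
      field_simp
    rw [← hveq]
    exact hraw
  -- Main pointwise second-derivative estimate
  have main : ∀ t ∈ Set.Ioo a b, deriv (deriv f) t < 0 := by
    intro t ht
    have ht0 : 0 < t := hI ht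
    obtain ⟨hu0, hu1⟩ := hmem t ht
    have hg0 : 0 < 1 - x t := by linarith
    have hx : HasDerivAt x (deriv x t) t := (hdiff t ht).hasDerivAt
    have hx2 : HasDerivAt (deriv x) (deriv (deriv x) t) t := (hdiff2 t ht).hasDerivAt
    have hc2 : HasDerivAt (fun s => 1 - x s) (-(deriv x t)) t := hx.const_sub 1
    have hp1 : HasDerivAt (fun s => x s ^ (-α - 1))
        (deriv x t * (-α - 1) * x t ^ (-α - 1 - 1)) t := hx.rpow_const (Or.inl hu0.ne')
    have hq0 : HasDerivAt (fun s => (1 - x s) ^ (-α))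
        (-(deriv x t) * -α * (1 - x t) ^ (-α - 1)) t := hc2.rpow_const (Or.inl hg0.ne')
    have hq1 : HasDerivAt (fun s => (1 - x s) ^ (-α - 1))
        (-(deriv x t) * (-α - 1) * (1 - x t) ^ (-α - 1 - 1)) t :=
      hc2.rpow_const (Or.inl hg0.ne')
    have htβ : HasDerivAt (fun s : ℝ => s ^ (-β)) (-β * t ^ (-β - 1)) t :=
      Real.hasDerivAt_rpow_const (Or.inl ht0.ne')
    have htβ1 : HasDerivAt (fun s : ℝ => s ^ (1 - β)) ((1 - β) * t ^ (1 - β - 1)) t :=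
      Real.hasDerivAt_rpow_const (Or.inl ht0.ne')
    -- derivative of each term of the differentiated FOC
    have T1 : HasDerivAt (fun s => τ * σe * α * (x s ^ (-α - 1) * deriv x s))
        (τ * σe * α * (deriv x t * (-α - 1) * x t ^ (-α - 1 - 1) * deriv x t
          + x t ^ (-α - 1) * deriv (deriv x) t)) t :=
      (hp1.mul hx2).const_mul (τ * σe * α)
    have T2 : HasDerivAt (fun s => τ * σe * (s ^ (-β) * (1 - x s) ^ (-α)))
        (τ * σe * (-β * t ^ (-β - 1) * (1 - x t) ^ (-α)
          + t ^ (-β) * (-(deriv x t) * -α * (1 - x t) ^ (-α - 1)))) t :=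
      (htβ.mul hq0).const_mul (τ * σe)
    have T3raw : HasDerivAt
        (fun s => τ * σe / (1 - β) * α * (s ^ (1 - β) * ((1 - x s) ^ (-α - 1) * deriv x s)))
        (τ * σe / (1 - β) * α * ((1 - β) * t ^ (1 - β - 1) * ((1 - x t) ^ (-α - 1) * deriv x t)
          + t ^ (1 - β) * (-(deriv x t) * (-α - 1) * (1 - x t) ^ (-α - 1 - 1) * deriv x t
            + (1 - x t) ^ (-α - 1) * deriv (deriv x) t))) t :=
      (htβ1.mul (hq1.mul hx2)).const_mul (τ * σe / (1 - β) * α)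
    have T3 : HasDerivAt
        (fun s => τ * σe / (1 - β) * α * (s ^ (1 - β) * ((1 - x s) ^ (-α - 1) * deriv x s)))
        (τ * σe * α * (t ^ (-β) * ((1 - x t) ^ (-α - 1) * deriv x t))
          + τ * σe / (1 - β) * α
            * (t ^ (1 - β) * (-(deriv x t) * (-α - 1) * (1 - x t) ^ (-α - 1 - 1) * deriv x t
              + (1 - x t) ^ (-α - 1) * deriv (deriv x) t))) t := by
      have hveq : τ * σe / (1 - β) * α
          * ((1 - β) * t ^ (1 - β - 1) * ((1 - x t) ^ (-α - 1) * deriv x t)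
            + t ^ (1 - β) * (-(deriv x t) * (-α - 1) * (1 - x t) ^ (-α - 1 - 1) * deriv x t
              + (1 - x t) ^ (-α - 1) * deriv (deriv x) t))
          = τ * σe * α * (t ^ (-β) * ((1 - x t) ^ (-α - 1) * deriv x t))
            + τ * σe / (1 - β) * α
              * (t ^ (1 - β) * (-(deriv x t) * (-α - 1) * (1 - x t) ^ (-α - 1 - 1) * deriv x t
                + (1 - x t) ^ (-α - 1) * deriv (deriv x) t)) := by
        rw [show (1:ℝ) - β - 1 = -β by ring]
        field_simp
      rw [← hveq]
      exact T3raw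
    have hGd : HasDerivAt (fun s => τ * σe * α * (x s ^ (-α - 1) * deriv x s)
        + τ * σe * (s ^ (-β) * (1 - x s) ^ (-α))
        + τ * σe / (1 - β) * α * (s ^ (1 - β) * ((1 - x s) ^ (-α - 1) * deriv x s)))
        (τ * σe * α * (deriv x t * (-α - 1) * x t ^ (-α - 1 - 1) * deriv x t
          + x t ^ (-α - 1) * deriv (deriv x) t)
        + τ * σe * (-β * t ^ (-β - 1) * (1 - x t) ^ (-α)
          + t ^ (-β) * (-(deriv x t) * -α * (1 - x t) ^ (-α - 1)))
        + (τ * σe * α * (t ^ (-β) * ((1 - x t) ^ (-α - 1) * deriv x t))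
          + τ * σe / (1 - β) * α
            * (t ^ (1 - β) * (-(deriv x t) * (-α - 1) * (1 - x t) ^ (-α - 1 - 1) * deriv x t
              + (1 - x t) ^ (-α - 1) * deriv (deriv x) t)))) t := (T1.add T2).add T3
    have hGev : (fun s => τ * σe * α * (x s ^ (-α - 1) * deriv x s)
        + τ * σe * (s ^ (-β) * (1 - x s) ^ (-α))
        + τ * σe / (1 - β) * α * (s ^ (1 - β) * ((1 - x s) ^ (-α - 1) * deriv x s)))
        =ᶠ[nhds t] fun _ => (0:ℝ) := by
      filter_upwards [isOpen_Ioo.mem_nhds ht] with y hy using hE1 y hy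
    have hGz : deriv (fun s => τ * σe * α * (x s ^ (-α - 1) * deriv x s)
        + τ * σe * (s ^ (-β) * (1 - x s) ^ (-α))
        + τ * σe / (1 - β) * α * (s ^ (1 - β) * ((1 - x s) ^ (-α - 1) * deriv x s))) t = 0 := by
      rw [hGev.deriv_eq]; exact deriv_const t 0
    have e2 := hGd.deriv.symm.trans hGz
    have e1 := hE1 t ht
    -- second derivative of f at t
    have hW : HasDerivAt (fun s => -(σc * ((1 - x s) ^ (-γ) * deriv x s)) - C)
        (-(σc * (-(deriv x t) * -γ * (1 - x t) ^ (-γ - 1) * deriv x t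
          + (1 - x t) ^ (-γ) * deriv (deriv x) t))) t :=
      ((((hc2.rpow_const (Or.inl hg0.ne')).mul hx2).const_mul σc).neg).sub_const C
    have hev2 : deriv f =ᶠ[nhds t] fun s => -(σc * ((1 - x s) ^ (-γ) * deriv x s)) - C := by
      filter_upwards [isOpen_Ioo.mem_nhds ht] with y hy using (hdf y hy).deriv
    rw [hev2.deriv_eq, hW.deriv]
    -- now pure algebra: rewrite powers in terms of base atoms
    have eu : x t ^ (-α - 1) = x t ^ (-α - 2) * x t := by
      rw [show (-α - 1 : ℝ) = (-α - 2) + 1 by ring, Real.rpow_add hu0, Real.rpow_one]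
    have eg1 : (1 - x t) ^ (-α - 1) = (1 - x t) ^ (-α - 2) * (1 - x t) := by
      rw [show (-α - 1 : ℝ) = (-α - 2) + 1 by ring, Real.rpow_add hg0, Real.rpow_one]
    have eg0 : (1 - x t) ^ (-α) = (1 - x t) ^ (-α - 1) * (1 - x t) := by
      nth_rewrite 1 [show (-α : ℝ) = (-α - 1) + 1 by ring]
      rw [Real.rpow_add hg0, Real.rpow_one]
    have eγ : (1 - x t) ^ (-γ) = (1 - x t) ^ (-γ - 1) * (1 - x t) := by
      nth_rewrite 1 [show (-γ : ℝ) = (-γ - 1) + 1 by ring]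
      rw [Real.rpow_add hg0, Real.rpow_one]
    have et0 : t ^ (-β) = t ^ (-β - 1) * t := by
      nth_rewrite 1 [show (-β : ℝ) = (-β - 1) + 1 by ring]
      rw [Real.rpow_add ht0, Real.rpow_one]
    have et1 : t ^ (1 - β) = t ^ (-β - 1) * t * t := by
      nth_rewrite 1 [show (1 - β : ℝ) = ((-β - 1) + 1) + 1 by ring]
      rw [Real.rpow_add ht0, Real.rpow_add ht0, Real.rpow_one]
    have exp2 : (-α - 1 - 1 : ℝ) = -α - 2 := by ring
    rw [exp2] at e2
    rw [eu, eg0, eg1, et0, et1] at e1 e2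
    rw [eγ]
    -- positivity of the atoms
    have hP : 0 < x t ^ (-α - 2) := Real.rpow_pos_of_pos hu0 _
    have hQ : 0 < (1 - x t) ^ (-α - 2) := Real.rpow_pos_of_pos hg0 _
    have hR : 0 < t ^ (-β - 1) := Real.rpow_pos_of_pos ht0 _
    have hM : 0 < (1 - x t) ^ (-γ - 1) := Real.rpow_pos_of_pos hg0 _
    have hA : 0 < τ * σe := mul_pos hτ hσe
    -- the key algebraic identity obtained from the two differentiated FOC identities
    have key : (τ * σe * α * (x t * x t ^ (-α - 2))
          + τ * σe / (1 - β) * α * (t * t * t ^ (-β - 1) * ((1 - x t) * (1 - x t) ^ (-α - 2))))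
        * (γ * deriv x t ^ 2 + (1 - x t) * deriv (deriv x) t)
        = β * (τ * σe) * t ^ (-β - 1) * ((1 - x t) * (1 - x t) * (1 - x t)) * (1 - x t) ^ (-α - 2)
          + deriv x t ^ 2 * (τ * σe * α * (γ + 2 * α) * (x t * x t ^ (-α - 2))
            + τ * σe * α * (α + 1) * ((1 - x t) * x t ^ (-α - 2))
            + τ * σe / (1 - β) * α * (γ + α - 1)
              * (t * t * t ^ (-β - 1) * ((1 - x t) * (1 - x t) ^ (-α - 2)))) := by
      linear_combination (1 - x t) * e2 + (-2 * α * deriv x t) * e1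
    have hD : 0 < τ * σe * α * (x t * x t ^ (-α - 2))
        + τ * σe / (1 - β) * α * (t * t * t ^ (-β - 1) * ((1 - x t) * (1 - x t) ^ (-α - 2))) :=
      add_pos (mul_pos (mul_pos hA hα0) (mul_pos hu0 hP))
        (mul_pos (mul_pos (div_pos hA hb1) hα0)
          (mul_pos (mul_pos (mul_pos ht0 ht0) hR) (mul_pos hg0 hQ)))
    have hRHS : 0 < β * (τ * σe) * t ^ (-β - 1)
          * ((1 - x t) * (1 - x t) * (1 - x t)) * (1 - x t) ^ (-α - 2)
        + deriv x t ^ 2 * (τ * σe * α * (γ + 2 * α) * (x t * x t ^ (-α - 2))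
          + τ * σe * α * (α + 1) * ((1 - x t) * x t ^ (-α - 2))
          + τ * σe / (1 - β) * α * (γ + α - 1)
            * (t * t * t ^ (-β - 1) * ((1 - x t) * (1 - x t) ^ (-α - 2)))) := by
      have h1 : 0 < β * (τ * σe) * t ^ (-β - 1)
          * ((1 - x t) * (1 - x t) * (1 - x t)) * (1 - x t) ^ (-α - 2) :=
        mul_pos (mul_pos (mul_pos (mul_pos hβ0 hA) hR)
          (mul_pos (mul_pos hg0 hg0) hg0)) hQ
      have h2 : 0 ≤ deriv x t ^ 2 * (τ * σe * α * (γ + 2 * α) * (x t * x t ^ (-α - 2))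
          + τ * σe * α * (α + 1) * ((1 - x t) * x t ^ (-α - 2))
          + τ * σe / (1 - β) * α * (γ + α - 1)
            * (t * t * t ^ (-β - 1) * ((1 - x t) * (1 - x t) ^ (-α - 2)))) := by
        apply mul_nonneg (sq_nonneg _)
        have p1 : 0 < τ * σe * α * (γ + 2 * α) * (x t * x t ^ (-α - 2)) :=
          mul_pos (mul_pos (mul_pos hA hα0) (by linarith)) (mul_pos hu0 hP)
        have p2 : 0 < τ * σe * α * (α + 1) * ((1 - x t) * x t ^ (-α - 2)) :=
          mul_pos (mul_pos (mul_pos hA hα0) (by linarith)) (mul_pos hg0 hP)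
        have p3 : 0 < τ * σe / (1 - β) * α * (γ + α - 1)
            * (t * t * t ^ (-β - 1) * ((1 - x t) * (1 - x t) ^ (-α - 2))) :=
          mul_pos (mul_pos (mul_pos (div_pos hA hb1) hα0) hsum)
            (mul_pos (mul_pos (mul_pos ht0 ht0) hR) (mul_pos hg0 hQ))
        linarith
      linarith
    have key2 : 0 < γ * deriv x t ^ 2 + (1 - x t) * deriv (deriv x) t := by
      by_contra h
      push_neg at h
      have := mul_nonpos_of_nonneg_of_nonpos hD.le h
      rw [key] at this
      linarith
    have hfin : (0:ℝ) < σc * ((1 - x t) ^ (-γ - 1)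
        * (γ * deriv x t ^ 2 + (1 - x t) * deriv (deriv x) t)) :=
      mul_pos hσc (mul_pos hM key2)
    have h9 : -(σc * (-deriv x t * -γ * (1 - x t) ^ (-γ - 1) * deriv x t
        + (1 - x t) ^ (-γ - 1) * (1 - x t) * deriv (deriv x) t))
        = -(σc * ((1 - x t) ^ (-γ - 1)
          * (γ * deriv x t ^ 2 + (1 - x t) * deriv (deriv x) t))) := by ring
    rw [h9]
    linarith [hfin]
  refine ⟨main, ?_⟩
  have hcont : ContinuousOn f (Set.Ioo a b) := fun s hs =>
    ((hdf s hs).differentiableAt).continuousAt.continuousWithinAt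
  apply strictConcaveOn_of_deriv2_neg (convex_Ioo a b) hcont
  intro t ht
  rw [interior_Ioo] at ht
  have := main t ht
  simpa [Function.iterate_succ, Function.iterate_zero, Function.comp] using this
end
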